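/- arXiv:2009.14557 — 7 statements merged into one kernel-verified Lean document; each statement's English description precedes it below -/
import Mathlib

section
/- If I is a tropical ideal in the Laurent tropical polynomial semiring (min-plus semiring over ℝ ∪ {∞}) in n variables, then its intersection with the tropical polynomial semiring ℝ̄[x₁,…,xₙ] is also a tropical ideal, i.e., it satisfies the monomial elimination axiom. -/
open scoped Classical
open Filter

noncomputable section

namespace TropStmt

/-- The tropical semiring of coefficients: `ℝ ∪ {∞}`, with `⊕ = min` and `⊙ = +`. -/
abbrev TR : Type := WithTop ℝ

/-- A tropical polynomial with monomials indexed by `M`, given by its coefficient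
function.  The coefficient `⊤ = ∞` means the monomial does not occur. -/
abbrev TPoly (M : Type) : Type := M → TR

section Generic

variable {M : Type} [AddCommMonoid M]

/-- The support of a tropical polynomial: monomials with coefficient `≠ ∞`. -/
def psupp (f : TPoly M) : Set M := {u | f u ≠ ⊤}

/-- The zero tropical polynomial (all coefficients `∞`). -/
def zeroPoly (M : Type) : TPoly M := fun _ => ⊤

/-- Tropical addition of polynomials: coefficientwise minimum. -/
def tadd (f g : TPoly M) : TPoly M := fun u => min (f u) (g u)

/-- Tropical multiplication of a polynomial `f` by the term `c ⊙ x^v`. -/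
def tmulTerm (c : TR) (v : M) (f : TPoly M) : TPoly M :=
  fun u => if h : ∃ t : M, t + v = u then c + f h.choose else ⊤

/-- An ideal in the semiring of tropical polynomials (with finite supports):
closed under tropical addition and multiplication by terms. -/
def IsTIdeal (I : Set (TPoly M)) : Prop :=
  (∀ f ∈ I, (psupp f).Finite) ∧ zeroPoly M ∈ I ∧
    (∀ f ∈ I, ∀ g ∈ I, tadd f g ∈ I) ∧
    ∀ f ∈ I, ∀ (c : TR) (v : M), tmulTerm c v f ∈ I

/-- `Elim h f g u`: `h` is an elimination of the monomial `x^u` from `f` and `g`: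
`[h]_u = ∞`, `[h]_v ≥ min([f]_v, [g]_v)` for all `v`, with equality whenever
`[f]_v ≠ [g]_v`. -/
def Elim (h f g : TPoly M) (u : M) : Prop :=
  h u = ⊤ ∧ ∀ v : M, min (f v) (g v) ≤ h v ∧ (f v ≠ g v → h v = min (f v) (g v))

/-- A tropical ideal: an ideal satisfying the monomial elimination axiom. -/
def IsTropIdeal (I : Set (TPoly M)) : Prop :=
  IsTIdeal I ∧
    ∀ f ∈ I, ∀ g ∈ I, ∀ u : M, f u = g u → f u ≠ ⊤ → ∃ h ∈ I, Elim h f g u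

/-- The ideal generated by a set of tropical polynomials. -/
def idealGen (S : Set (TPoly M)) : Set (TPoly M) := ⋂₀ {I | IsTIdeal I ∧ S ⊆ I}

/-- The monomial `x^u` (as a tropical polynomial, with coefficient `0`). -/
def monPoly (u : M) : TPoly M := fun v => if v = u then (0 : TR) else ⊤

end Generic

section Vars

variable {n m : ℕ}

/-- Embedding of polynomials into Laurent polynomials. -/
def embed (f : TPoly (Fin n → ℕ)) : TPoly (Fin n → ℤ) :=
  fun u => if h : ∃ v : Fin n → ℕ, (fun i => ((v i : ℤ))) = u then f h.choose else ⊤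

/-- Multiplication of a Laurent polynomial by the Laurent monomial `x^v`. -/
def shiftZ (v : Fin n → ℤ) (f : TPoly (Fin n → ℤ)) : TPoly (Fin n → ℤ) :=
  fun u => f (u - v)

/-- The ideal generated in the Laurent polynomial semiring by an ideal of the
polynomial semiring: its elements are the Laurent-monomial multiples `x^v ⊙ f`, `f ∈ I`. -/
def Lext (I : Set (TPoly (Fin n → ℕ))) : Set (TPoly (Fin n → ℤ)) :=
  {g | ∃ f ∈ I, ∃ v : Fin n → ℤ, g = shiftZ v (embed f)}

/-- The intersection of a Laurent ideal with the polynomial subsemiring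
`ℝ̄[x₁,…,xₙ]`, viewed as a set of (ℕ-exponent) polynomials. -/
def restrictPoly (I : Set (TPoly (Fin n → ℤ))) : Set (TPoly (Fin n → ℕ)) :=
  {f | embed f ∈ I}

def dotZ (w : Fin n → ℝ) (u : Fin n → ℤ) : ℝ := ∑ i, w i * (u i : ℝ)

def dotN (w : Fin n → ℝ) (u : Fin n → ℕ) : ℝ := ∑ i, w i * (u i : ℝ)

/-- `attainsZ w f u`: the monomial `u` occurs in `f` and attains the minimum in the
tropical evaluation of `f` at `w`. -/
def attainsZ (w : Fin n → ℝ) (f : TPoly (Fin n → ℤ)) (u : Fin n → ℤ) : Prop :=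
  f u ≠ ⊤ ∧ ∀ v : Fin n → ℤ, f u + ((dotZ w u : ℝ) : TR) ≤ f v + ((dotZ w v : ℝ) : TR)

def attainsN (w : Fin n → ℝ) (f : TPoly (Fin n → ℕ)) (u : Fin n → ℕ) : Prop :=
  f u ≠ ⊤ ∧ ∀ v : Fin n → ℕ, f u + ((dotN w u : ℝ) : TR) ≤ f v + ((dotN w v : ℝ) : TR)

/-- The support of the initial form `in_w(f)` of a Laurent polynomial, a Boolean
polynomial represented by its set of monomials. -/
def inSuppZ (w : Fin n → ℝ) (f : TPoly (Fin n → ℤ)) : Set (Fin n → ℤ) := {u | attainsZ w f u}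

def inSuppN (w : Fin n → ℝ) (f : TPoly (Fin n → ℕ)) : Set (Fin n → ℕ) := {u | attainsN w f u}

/-- The initial ideal `in_w(I)` of a Laurent tropical ideal, represented as the set of
supports of the (Boolean) initial forms of elements of `I`. -/
def inIdealZ (I : Set (TPoly (Fin n → ℤ))) (w : Fin n → ℝ) : Set (Set (Fin n → ℤ)) :=
  {S | ∃ f ∈ I, S = inSuppZ w f}

def inIdealN (I : Set (TPoly (Fin n → ℕ))) (w : Fin n → ℝ) : Set (Set (Fin n → ℕ)) :=
  {S | ∃ f ∈ I, S = inSuppN w f}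

/-- The tropical variety of a Laurent tropical ideal: points where every nonzero
element attains its minimum at least twice. -/
def trvarietyZ (I : Set (TPoly (Fin n → ℤ))) : Set (Fin n → ℝ) :=
  {w | ∀ f ∈ I, (∀ u, f u = ⊤) ∨ ∃ u v, u ≠ v ∧ attainsZ w f u ∧ attainsZ w f v}

/-- `attainsB w S u`: in the Boolean polynomial with support `S`, the monomial `u`
attains the minimum at `w`. -/
def attainsB (w : Fin n → ℝ) (S : Set (Fin n → ℤ)) (u : Fin n → ℤ) : Prop :=
  u ∈ S ∧ ∀ v ∈ S, dotZ w u ≤ dotZ w v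

/-- Support of the initial form of a Boolean polynomial (given by its support `S`). -/
def inSuppB (w : Fin n → ℝ) (S : Set (Fin n → ℤ)) : Set (Fin n → ℤ) := {u | attainsB w S u}

/-- Variety of a Boolean (support-set) ideal. -/
def BvarietyZ (J : Set (Set (Fin n → ℤ))) : Set (Fin n → ℝ) :=
  {w | ∀ S ∈ J, S = ∅ ∨ ∃ u v, u ≠ v ∧ attainsB w S u ∧ attainsB w S v}

/-- A monomial term order on `ℝ̄[x₁,…,xₙ]` (as a strict order relation `r`, where
`r u v` means `x^u ≺ x^v`).  Note `x^0 = 1` is the largest monomial. -/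
structure IsTermOrder (n : ℕ) (r : (Fin n → ℕ) → (Fin n → ℕ) → Prop) : Prop where
  irrefl : ∀ u, ¬ r u u
  trans : ∀ u v w, r u v → r v w → r u w
  total : ∀ u v, u ≠ v → r u v ∨ r v u
  add_invariant : ∀ u v t, r u v → r (u + t) (v + t)
  lt_one : ∀ u, u ≠ 0 → r u 0

/-- `u` is the `r`-initial monomial of `f`: the `r`-smallest monomial in the support. -/
def isInitialMon (r : (Fin n → ℕ) → (Fin n → ℕ) → Prop) (f : TPoly (Fin n → ℕ))
    (u : Fin n → ℕ) : Prop :=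
  f u ≠ ⊤ ∧ ∀ v, f v ≠ ⊤ → v ≠ u → r u v

/-- The set of monomials of the monomial initial ideal `in_≺(I)`: all monomial
multiples of initial monomials of elements of `I`. -/
def monInitialSet (r : (Fin n → ℕ) → (Fin n → ℕ) → Prop) (I : Set (TPoly (Fin n → ℕ))) :
    Set (Fin n → ℕ) :=
  {u | ∃ g ∈ I, ∃ v, isInitialMon r g v ∧ ∃ t, u = v + t}

/-- Total degree of a monomial. -/
def totdeg (u : Fin m → ℕ) : ℕ := ∑ i, u i

/-- `E` is an independent set for (the matroids of) `I`: it does not contain the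
support of any nonzero polynomial of `I`. -/
def indepFinset (I : Set (TPoly (Fin m → ℕ))) (E : Finset (Fin m → ℕ)) : Prop :=
  ∀ f ∈ I, (∃ u, f u ≠ ⊤) → ¬ (psupp f ⊆ ↑E)

/-- `hilbAt I d N`: the Hilbert function of the homogeneous tropical ideal `I` takes
the value `N` at degree `d`, i.e. `N` is the maximum size of a set of degree-`d`
monomials not containing the support of any polynomial of `I`. -/
def hilbAt (I : Set (TPoly (Fin m → ℕ))) (d N : ℕ) : Prop :=
  (∃ E : Finset (Fin m → ℕ), (∀ u ∈ E, totdeg u = d) ∧ indepFinset I E ∧ E.card = N) ∧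
    ∀ E : Finset (Fin m → ℕ), (∀ u ∈ E, totdeg u = d) → indepFinset I E → E.card ≤ N

/-- The degree-`d` homogeneous part of a tropical polynomial. -/
def homPart (f : TPoly (Fin m → ℕ)) (d : ℕ) : TPoly (Fin m → ℕ) :=
  fun u => if totdeg u = d then f u else ⊤

/-- A homogeneous tropical ideal. -/
def IsHomogTropIdeal (I : Set (TPoly (Fin m → ℕ))) : Prop :=
  IsTropIdeal I ∧ ∀ f ∈ I, ∀ d : ℕ, homPart f d ∈ I

/-- The (total) degree of a tropical polynomial. -/
def polyDeg (f : TPoly (Fin m → ℕ)) : ℕ := sSup (totdeg '' psupp f)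

/-- The homogenization of a tropical polynomial, using a new variable `x₀`. -/
def homogenize (f : TPoly (Fin m → ℕ)) : TPoly (Fin (m + 1) → ℕ) :=
  fun v => if v 0 + totdeg (fun i : Fin m => v i.succ) = polyDeg f
    then f (fun i : Fin m => v i.succ) else ⊤

/-- The homogenization of a tropical ideal. -/
def homogIdeal (I : Set (TPoly (Fin m → ℕ))) : Set (TPoly (Fin (m + 1) → ℕ)) :=
  idealGen (homogenize '' I)

/-- `dimAgrees I p`: `p` is the Hilbert polynomial of the homogenization of `I`,
i.e. the Hilbert function of `I^h` eventually agrees with `p`.  The dimension of the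
tropical ideal `I` is the degree of such a `p`. -/
def dimAgrees (I : Set (TPoly (Fin m → ℕ))) (p : Polynomial ℝ) : Prop :=
  ∀ᶠ d in atTop, ∃ N : ℕ, hilbAt (homogIdeal I) d N ∧ (N : ℝ) = p.eval (d : ℝ)

/-- Specialization of the last variable `x_{n+1} = a` of a tropical polynomial. -/
def specLast (a : ℝ) (f : TPoly (Fin (n + 1) → ℕ)) : TPoly (Fin n → ℕ) :=
  fun u => sInf {t : TR | ∃ k : ℕ, t = f (Fin.snoc u k) + k • ((a : ℝ) : TR)}

/-- Specialization of the `y`-variables at a point `a ∈ ℝ̄^m`. -/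
def specializeY (a : Fin m → TR) (f : TPoly ((Fin n → ℕ) × (Fin m → ℕ))) :
    TPoly (Fin n → ℕ) :=
  fun u => sInf {t : TR | ∃ v : Fin m → ℕ, t = f (u, v) + ∑ i, v i • a i}

/-- Dehomogenization: substitute `x₀ = 0` (the tropical multiplicative unit). -/
def dehom (f : TPoly (Fin (n + 1) → ℕ)) : TPoly (Fin n → ℕ) :=
  fun u => sInf {t : TR | ∃ k : ℕ, t = f (Fin.cons k u)}

/-- The trivialization of a tropical polynomial: all finite coefficients become `0`. -/
def phiBool (f : TPoly (Fin (n + 1) → ℕ)) : TPoly (Fin (n + 1) → ℕ) :=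
  fun u => if f u = ⊤ then (⊤ : TR) else 0

/-- Independence of a finite set of Laurent monomials relative to a Laurent ideal. -/
def LindepFinset (I : Set (TPoly (Fin n → ℤ))) (E : Finset (Fin n → ℤ)) : Prop :=
  ∀ f ∈ I, (∃ u, f u ≠ ⊤) → ¬ (psupp f ⊆ ↑E)

/-- `LdegIs I d`: the zero-dimensional Laurent tropical ideal `I` has degree `d`:
`d` is the maximal size of a finite set of monomials not containing the support
of any nonzero element of `I`. -/
def LdegIs (I : Set (TPoly (Fin n → ℤ))) (d : ℕ) : Prop :=
  (∃ E : Finset (Fin n → ℤ), LindepFinset I E ∧ E.card = d) ∧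
    ∀ E : Finset (Fin n → ℤ), LindepFinset I E → E.card ≤ d

/-- A Laurent tropical ideal is zero-dimensional if the sizes of independent sets of
monomials are bounded. -/
def IsZeroDimL (I : Set (TPoly (Fin n → ℤ))) : Prop :=
  ∃ N : ℕ, ∀ E : Finset (Fin n → ℤ), LindepFinset I E → E.card ≤ N

def BindepFinset (J : Set (Set (Fin n → ℤ))) (E : Finset (Fin n → ℤ)) : Prop :=
  ∀ S ∈ J, S.Nonempty → ¬ (S ⊆ ↑E)

/-- Degree of a zero-dimensional Boolean (support-set) ideal. -/
def BdegIs (J : Set (Set (Fin n → ℤ))) (d : ℕ) : Prop :=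
  (∃ E : Finset (Fin n → ℤ), BindepFinset J E ∧ E.card = d) ∧
    ∀ E : Finset (Fin n → ℤ), BindepFinset J E → E.card ≤ d

/-- A Laurent monomial `u` has degree zero for the grading induced by the subspace `L`. -/
def degZero (L : Submodule ℝ (Fin n → ℝ)) (u : Fin n → ℤ) : Prop :=
  ∀ v ∈ L, (∑ i, v i * (u i : ℝ)) = 0

/-- Degree of the degree-zero part (for the grading induced by `L`) of a Boolean
support-set ideal `J`: the maximal size of a finite set of degree-zero monomials not
containing the support of any nonempty element of the degree-zero part of `J`. -/
def Bdeg0Is (J : Set (Set (Fin n → ℤ))) (L : Submodule ℝ (Fin n → ℝ)) (d : ℕ) : Prop :=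
  (∃ E : Finset (Fin n → ℤ), (∀ u ∈ E, degZero L u) ∧
      (∀ S ∈ J, (∀ u ∈ S, degZero L u) → S.Nonempty → ¬ (S ⊆ ↑E)) ∧ E.card = d) ∧
    ∀ E : Finset (Fin n → ℤ), (∀ u ∈ E, degZero L u) →
      (∀ S ∈ J, (∀ u ∈ S, degZero L u) → S.Nonempty → ¬ (S ⊆ ↑E)) → E.card ≤ d

/-- An `ℝ`-rational polyhedron: defined by finitely many inequalities with integral
normal vectors and real constants. -/
def IsRatPolyhedron (P : Set (Fin n → ℝ)) : Prop :=
  ∃ (k : ℕ) (a : Fin k → Fin n → ℤ) (b : Fin k → ℝ),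
    P = {x | ∀ i, (∑ j, (a i j : ℝ) * x j) ≤ b i}

/-- `F` is a face of the polyhedron `P`. -/
def IsFaceOf (F P : Set (Fin n → ℝ)) : Prop :=
  F = P ∨ ∃ (a : Fin n → ℝ) (b : ℝ), (∀ x ∈ P, (∑ i, a i * x i) ≤ b) ∧
    F = {x | x ∈ P ∧ (∑ i, a i * x i) = b}

/-- The linear span of the directions of a subset of `ℝⁿ`. -/
def spanDirs (σ : Set (Fin n → ℝ)) : Submodule ℝ (Fin n → ℝ) :=
  Submodule.span ℝ {y | ∃ p ∈ σ, ∃ q ∈ σ, y = p - q}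

/-- The dimension of a polyhedron. -/
def pdim (σ : Set (Fin n → ℝ)) : ℕ := Module.finrank ℝ (spanDirs σ)

/-- `u ∈ ℤⁿ` is primitive modulo the subspace `L`: it is a first lattice point, i.e.
nonzero and not a `k`-th multiple (`k ≥ 2`) of a lattice vector modulo `L`. -/
def PrimitiveMod (L : Submodule ℝ (Fin n → ℝ)) (u : Fin n → ℤ) : Prop :=
  (fun i => (u i : ℝ)) ∉ L ∧
    ∀ k : ℕ, 2 ≤ k → ∀ v : Fin n → ℤ, (fun i => (u i : ℝ) - (k : ℝ) * (v i : ℝ)) ∉ L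

/-- `hasDisk S d`: `S` contains a `d`-dimensional disk around some point. -/
def hasDisk (S : Set (Fin n → ℝ)) (d : ℕ) : Prop :=
  ∃ (x : Fin n → ℝ) (W : Submodule ℝ (Fin n → ℝ)), Module.finrank ℝ W = d ∧
    ∃ ε > (0 : ℝ), ∀ y ∈ W, ‖y‖ < ε → x + y ∈ S

/-- The monomial map `φ* : x^u ↦ y^{Au}` on Laurent tropical polynomials. -/
def phiMap (A : Matrix (Fin n) (Fin n) ℤ) (f : TPoly (Fin n → ℤ)) : TPoly (Fin n → ℤ) :=
  fun v => if h : ∃ u : Fin n → ℤ, A.mulVec u = v then f h.choose else ⊤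

end Vars

section Product

variable {n m : ℕ}

def attainsP (x : (Fin n → ℝ) × (Fin m → ℝ)) (f : TPoly ((Fin n → ℤ) × (Fin m → ℤ)))
    (p : (Fin n → ℤ) × (Fin m → ℤ)) : Prop :=
  f p ≠ ⊤ ∧ ∀ q : (Fin n → ℤ) × (Fin m → ℤ),
    f p + ((dotZ x.1 p.1 + dotZ x.2 p.2 : ℝ) : TR) ≤ f q + ((dotZ x.1 q.1 + dotZ x.2 q.2 : ℝ) : TR)

def trvarietyP (I : Set (TPoly ((Fin n → ℤ) × (Fin m → ℤ)))) :
    Set ((Fin n → ℝ) × (Fin m → ℝ)) :=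
  {x | ∀ f ∈ I, (∀ p, f p = ⊤) ∨ ∃ p q, p ≠ q ∧ attainsP x f p ∧ attainsP x f q}

end Product

section Univariate

def attains1 (x : ℝ) (f : TPoly ℤ) (u : ℤ) : Prop :=
  f u ≠ ⊤ ∧ ∀ v : ℤ, f u + (((u : ℝ) * x : ℝ) : TR) ≤ f v + (((v : ℝ) * x : ℝ) : TR)

def inSupp1 (x : ℝ) (f : TPoly ℤ) : Set ℤ := {u | attains1 x f u}

def trvariety1 (I : Set (TPoly ℤ)) : Set ℝ :=
  {x | ∀ f ∈ I, (∀ u, f u = ⊤) ∨ ∃ u v, u ≠ v ∧ attains1 x f u ∧ attains1 x f v}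

/-- The variety of a single univariate Laurent tropical polynomial. -/
def Vf (h : TPoly ℤ) : Set ℝ :=
  {x | (∀ u, h u = ⊤) ∨ ∃ u v, u ≠ v ∧ attains1 x h u ∧ attains1 x h v}

/-- Evaluation of a univariate Laurent tropical polynomial at `x ∈ ℝ`. -/
def eval1 (f : TPoly ℤ) (x : ℝ) : TR := sInf {t : TR | ∃ u : ℤ, t = f u + (((u : ℝ) * x : ℝ) : TR)}

/-- `g` is the convexification of `f`: it defines the same function and has the
(pointwise) minimal coefficients among all such polynomials. -/
def IsLConv (f g : TPoly ℤ) : Prop :=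
  (∀ x : ℝ, eval1 g x = eval1 f x) ∧
    ∀ h : TPoly ℤ, (∀ x : ℝ, eval1 h x = eval1 f x) → ∀ u, g u ≤ h u

/-- Tropical multiplication of univariate Laurent polynomials. -/
def pmulZ (f g : TPoly ℤ) : TPoly ℤ :=
  fun u => sInf {t : TR | ∃ i j : ℤ, i + j = u ∧ t = f i + g j}

def unit1 : TPoly ℤ := monPoly (0 : ℤ)

def powZ (f : TPoly ℤ) : ℕ → TPoly ℤ
  | 0 => unit1
  | (k + 1) => pmulZ f (powZ f k)

/-- The linear tropical polynomial `x ⊕ w`. -/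
def lin1 (w : ℝ) : TPoly ℤ :=
  fun u => if u = 0 then ((w : ℝ) : TR) else if u = 1 then (0 : TR) else ⊤

/-- Tropical divisibility of univariate Laurent polynomials. -/
def LDvd (f g : TPoly ℤ) : Prop := ∃ q : TPoly ℤ, (psupp q).Finite ∧ g = pmulZ f q

/-- `in_w(f)` is a Boolean polynomial lying in `𝔹[x]` of degree `m`. -/
def goodAt (x : ℝ) (f : TPoly ℤ) (m : ℕ) : Prop :=
  (m : ℤ) ∈ inSupp1 x f ∧ ∀ u ∈ inSupp1 x f, 0 ≤ u ∧ u ≤ (m : ℤ)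

/-- The multiplicity of `V(I)` at `x`: the smallest degree of a Boolean polynomial in
`in_x(I) ∩ 𝔹[x]`. -/
def idealMult1 (I : Set (TPoly ℤ)) (x : ℝ) (m : ℕ) : Prop :=
  (∃ f ∈ I, goodAt x f m) ∧ ∀ f ∈ I, ∀ m' : ℕ, goodAt x f m' → m ≤ m'

/-- The multiplicity of a univariate tropical polynomial `h` at `w`: the exponent of
the factor `(x ⊕ w)` in the factorization of the convexification of `h`. -/
def polyMult1 (h : TPoly ℤ) (w : ℝ) (m : ℕ) : Prop :=
  ∃ ch : TPoly ℤ, IsLConv h ch ∧ LDvd (powZ (lin1 w) m) ch ∧ ¬ LDvd (powZ (lin1 w) (m + 1)) ch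

end Univariate

end TropStmt

/-!
The polynomial semiring sits inside the Laurent one as the polynomials that are `∞` off `ℕⁿ`,
and this subsemiring is closed under elimination: an elimination `h` of `f` and `g` satisfies
`h ≥ min f g`, so it is `∞` wherever both `f` and `g` are. Hence the elimination that the
Laurent ideal provides for two polynomials is again a polynomial.
-/

namespace TropStmt

open Function

section Extend

variable {M N : Type}

/-- For injective `φ`, the image of `f` under the monomial map `x^a ↦ x^(φ a)`. -/
def extendByTop (φ : M → N) (f : TPoly M) : TPoly N := extend φ f (zeroPoly N)

lemma extendByTop_zeroPoly (φ : M → N) : extendByTop φ (zeroPoly M) = zeroPoly N :=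
  extend_const φ ⊤

lemma extendByTop_tadd {φ : M → N} (hφ : Injective φ) (f g : TPoly M) :
    extendByTop φ (tadd f g) = tadd (extendByTop φ f) (extendByTop φ g) := by
  funext b
  by_cases hb : ∃ a, φ a = b
  · obtain ⟨a, rfl⟩ := hb
    simp only [extendByTop, tadd, hφ.extend_apply]
  · simp only [extendByTop, tadd, extend_apply' _ _ _ hb, zeroPoly, min_self]

lemma tmulTerm_eq_extend [AddCommMonoid M] (c : TR) (v : M) (f : TPoly M) :
    tmulTerm c v f = extend (· + v) (fun t => c + f t) (zeroPoly M) := rfl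

/-- Both sides are extensions by `∞` along `φ ∘ (· + v) = (· + φ v) ∘ φ`. -/
lemma extendByTop_tmulTerm [AddCancelCommMonoid M] [AddCancelCommMonoid N] (φ : M →+ N)
    (hφ : Injective φ) (c : TR) (v : M) (f : TPoly M) :
    extendByTop φ (tmulTerm c v f) = tmulTerm c (φ v) (extendByTop φ f) := by
  have hcomm : φ ∘ (· + v) = (· + φ v) ∘ φ := funext fun t => map_add φ t v
  have hmul : extend φ (fun t => c + f t) (zeroPoly N) = fun s => c + extendByTop φ f s :=
    funext fun s => by
      simp only [extendByTop, apply_extend (c + ·), comp_def, zeroPoly, add_top]; rfl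
  calc extendByTop φ (tmulTerm c v f)
      = extend (φ ∘ (· + v)) (fun t => c + f t) (zeroPoly N) := by
        rw [tmulTerm_eq_extend, (add_left_injective v).extend_comp hφ]; rfl
    _ = extend (· + φ v) (extend φ (fun t => c + f t) (zeroPoly N)) (zeroPoly N) := by
        rw [hcomm, hφ.extend_comp (add_left_injective (φ v))]; rfl
    _ = tmulTerm c (φ v) (extendByTop φ f) := by rw [hmul, tmulTerm_eq_extend]

lemma extendByTop_comp {φ : M → N} (hφ : Injective φ) {g : TPoly N}
    (hg : ∀ b, (¬ ∃ a, φ a = b) → g b = ⊤) : extendByTop φ (g ∘ φ) = g := by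
  funext b
  by_cases hb : ∃ a, φ a = b
  · obtain ⟨a, rfl⟩ := hb
    exact hφ.extend_apply _ _ a
  · rw [extendByTop, extend_apply' _ _ _ hb, hg b hb]; rfl

lemma psupp_eq_preimage {φ : M → N} (hφ : Injective φ) (f : TPoly M) :
    psupp f = φ ⁻¹' psupp (extendByTop φ f) := by
  ext a
  simp only [psupp, Set.mem_preimage, Set.mem_ofPred_eq, extendByTop, hφ.extend_apply]

lemma Elim.top_of_eq_top {h f g : TPoly N} {u b : N} (hh : Elim h f g u)
    (hf : f b = ⊤) (hg : g b = ⊤) : h b = ⊤ := by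
  simpa [hf, hg] using (hh.2 b).1

lemma Elim.comp {h : TPoly N} {f g : TPoly M} {u : M} {φ : M → N} (hφ : Injective φ)
    (hh : Elim h (extendByTop φ f) (extendByTop φ g) (φ u)) : Elim (h ∘ φ) f g u := by
  refine ⟨hh.1, fun a => ?_⟩
  simpa only [extendByTop, hφ.extend_apply, comp_apply] using hh.2 (φ a)

end Extend

section Comap

variable {M N : Type} [AddCancelCommMonoid M] [AddCancelCommMonoid N]
  {I : Set (TPoly N)} {φ : M →+ N}

lemma IsTIdeal.preimage_extendByTop (hI : IsTIdeal I) (hφ : Injective φ) :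
    IsTIdeal (extendByTop φ ⁻¹' I) := by
  obtain ⟨hfin, hzero, hadd, hmul⟩ := hI
  refine ⟨fun f hf => ?_, ?_, fun f hf g hg => ?_, fun f hf c v => ?_⟩
  · rw [psupp_eq_preimage hφ]
    exact (hfin _ hf).preimage hφ.injOn
  · rw [Set.mem_preimage, extendByTop_zeroPoly]
    exact hzero
  · rw [Set.mem_preimage, extendByTop_tadd hφ]
    exact hadd _ hf _ hg
  · rw [Set.mem_preimage, extendByTop_tmulTerm φ hφ]
    exact hmul _ hf c (φ v)

lemma IsTropIdeal.preimage_extendByTop (hI : IsTropIdeal I) (hφ : Injective φ) :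
    IsTropIdeal (extendByTop φ ⁻¹' I) := by
  refine ⟨hI.1.preimage_extendByTop hφ, fun f hf g hg u hfg hu => ?_⟩
  have hext : ∀ p : TPoly M, extendByTop φ p (φ u) = p u := fun p => hφ.extend_apply p _ u
  obtain ⟨h, hhI, hh⟩ := hI.2 _ hf _ hg (φ u) (by rwa [hext, hext]) (by rwa [hext])
  have hoff : ∀ b, (¬ ∃ a, φ a = b) → h b = ⊤ := fun b hb =>
    hh.top_of_eq_top (extend_apply' _ _ _ hb) (extend_apply' _ _ _ hb)
  refine ⟨h ∘ φ, ?_, hh.comp hφ⟩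
  rwa [Set.mem_preimage, extendByTop_comp hφ hoff]

end Comap

lemma restrictPoly_eq_preimage {n : ℕ} (I : Set (TPoly (Fin n → ℤ))) :
    restrictPoly I = extendByTop ((Nat.castAddMonoidHom ℤ).compLeft (Fin n)) ⁻¹' I := rfl

end TropStmt

theorem intersection_with_polynomial_semiring_isTropicalIdeal
    (n : ℕ) (I : Set (TropStmt.TPoly (Fin n → ℤ))) (hI : TropStmt.IsTropIdeal I) :
    TropStmt.IsTropIdeal (TropStmt.restrictPoly I) := by
  rw [TropStmt.restrictPoly_eq_preimage]
  exact hI.preimage_extendByTop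
    (Nat.cast_injective.comp_left : Function.Injective fun v : Fin n → ℕ => ((↑) : ℕ → ℤ) ∘ v)
end
end

section
/- If I ⊆ ℝ̄[x₁,…,xₙ] is a tropical ideal, then the ideal I·ℝ̄[x₁^{±1},…,xₙ^{±1}] it generates in the Laurent tropical polynomial semiring is also a tropical ideal. -/
open scoped Classical
open Filter

noncomputable section

/-!
An element `x^w ⊙ f` of `Lext I` is `f` with its monomials relabelled along the injective map
`s ↦ s + w` and all other coefficients `∞`. Multiplying `f` by a monomial of `ℝ̄[x]` lowers `w`,
so any two elements of `Lext I` can be written over a common `w`. Relabelling along an injective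
map commutes with `⊕` and carries eliminations to eliminations, so the axioms transfer from `I`.
-/

namespace TropStmt

open Function

section ExtendByTop

variable {M N : Type} {φ : M → N}

theorem exists_eq_of_extend_top_ne_top {f : TPoly M} {y : N} (hy : extend φ f ⊤ y ≠ ⊤) :
    ∃ x, φ x = y := by
  by_contra h
  exact hy (extend_apply' f ⊤ y h)

theorem psupp_extend_top_subset (hφ : Injective φ) (f : TPoly M) :
    psupp (extend φ f ⊤) ⊆ φ '' psupp f := by
  intro y hy
  obtain ⟨x, rfl⟩ := exists_eq_of_extend_top_ne_top hy
  exact ⟨x, by rwa [psupp, Set.mem_ofPred_eq, hφ.extend_apply] at hy, rfl⟩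

theorem tadd_extend_top (hφ : Injective φ) (f g : TPoly M) :
    tadd (extend φ f ⊤) (extend φ g ⊤) = extend φ (tadd f g) ⊤ := by
  funext y
  by_cases hy : ∃ x, φ x = y
  · obtain ⟨x, rfl⟩ := hy
    simp only [tadd, hφ.extend_apply]
  · simp only [tadd, extend_apply' _ _ _ hy, Pi.top_apply, min_self]

theorem add_extend_top (c : TR) (f : TPoly M) (y : N) :
    c + extend φ f ⊤ y = extend φ (fun x => c + f x) ⊤ y := by
  rw [apply_extend (c + ·)]
  simp only [comp_def, Pi.top_apply, add_top]
  rfl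

theorem Elim.extend_top (hφ : Injective φ) {h f g : TPoly M} {u : M} (hElim : Elim h f g u) :
    Elim (extend φ h ⊤) (extend φ f ⊤) (extend φ g ⊤) (φ u) := by
  refine ⟨by rw [hφ.extend_apply, hElim.1], fun y => ?_⟩
  by_cases hy : ∃ x, φ x = y
  · obtain ⟨x, rfl⟩ := hy
    simpa only [hφ.extend_apply] using hElim.2 x
  · simp only [extend_apply' _ _ _ hy, Pi.top_apply, min_self, le_refl, ne_eq,
      not_true_eq_false, IsEmpty.forall_iff, and_self]

theorem exists_elim_extend_top [AddCommMonoid M] (hφ : Injective φ) {I : Set (TPoly M)}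
    (hI : IsTropIdeal I) {f g : TPoly M} (hf : f ∈ I) (hg : g ∈ I) {y : N}
    (hfg : extend φ f ⊤ y = extend φ g ⊤ y) (hy : extend φ f ⊤ y ≠ ⊤) :
    ∃ h ∈ I, Elim (extend φ h ⊤) (extend φ f ⊤) (extend φ g ⊤) y := by
  obtain ⟨x, rfl⟩ := exists_eq_of_extend_top_ne_top hy
  simp only [hφ.extend_apply] at hfg hy
  obtain ⟨h, hh, hElim⟩ := hI.2 f hf g hg x hfg hy
  exact ⟨h, hh, hElim.extend_top hφ⟩

end ExtendByTop

theorem tmulTerm_eq_extend_top {M : Type} [AddCommMonoid M] (c : TR) (v : M) (f : TPoly M) :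
    tmulTerm c v f = extend (· + v) (fun t => c + f t) ⊤ :=
  rfl

theorem tmulTerm_zero {M : Type} [AddCancelCommMonoid M] (c : TR) (f : TPoly M) :
    tmulTerm c 0 f = fun t => c + f t := by
  rw [tmulTerm_eq_extend_top]
  simp only [add_zero]
  exact extend_id _ _

section Translation

variable {M N : Type} [AddCommGroup N]

theorem extend_top_apply_sub {φ : M → N} (hφ : Injective φ) (f : TPoly M) (y t : N) :
    extend φ f ⊤ (y - t) = extend (fun x => φ x + t) f ⊤ y := by
  have h := hφ.extend_comp (add_left_injective t) f (⊤ : N → TR)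
  rw [comp_def] at h
  conv_rhs => rw [h, ← sub_add_cancel y t, (add_left_injective t).extend_apply]
  rfl

theorem tmulTerm_apply_eq_add_sub (c : TR) (v : N) (g : TPoly N) (y : N) :
    tmulTerm c v g y = c + g (y - v) := by
  conv_lhs => rw [← sub_add_cancel y v, tmulTerm_eq_extend_top, (add_left_injective v).extend_apply]

end Translation

section Laurent

variable {n : ℕ}

def laurentMon (w : Fin n → ℤ) (s : Fin n → ℕ) : Fin n → ℤ := fun i => s i + w i

theorem laurentMon_injective (w : Fin n → ℤ) : Injective (laurentMon w) := by
  intro s t h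
  funext i
  have := congrFun h i
  simp only [laurentMon] at this
  omega

theorem laurentMon_add (w : Fin n → ℤ) (s t : Fin n → ℕ) :
    laurentMon w (s + t) = laurentMon (laurentMon w t) s := by
  funext i
  simp only [laurentMon, Pi.add_apply, Nat.cast_add]
  ring

theorem laurentMon_add_right (w t : Fin n → ℤ) (s : Fin n → ℕ) :
    laurentMon w s + t = laurentMon (w + t) s := by
  funext i
  simp only [laurentMon, Pi.add_apply]
  ring

theorem exists_laurentMon_eq_of_le {w w' : Fin n → ℤ} (h : w ≤ w') :
    ∃ t, laurentMon w t = w' :=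
  ⟨fun i => (w' i - w i).toNat, funext fun i => by
    have : w i ≤ w' i := h i
    simp only [laurentMon]
    omega⟩

theorem shiftZ_embed (w : Fin n → ℤ) (f : TPoly (Fin n → ℕ)) :
    shiftZ w (embed f) = extend (laurentMon w) f ⊤ := by
  have hcast : Injective fun (s : Fin n → ℕ) (i : Fin n) => (s i : ℤ) :=
    fun s t h => funext fun i => Nat.cast_injective (congrFun h i)
  -- `embed` is definitionally `extend` along the coercion `ℕⁿ → ℤⁿ`.
  exact funext fun y => extend_top_apply_sub hcast f y w

theorem mem_Lext_iff {I : Set (TPoly (Fin n → ℕ))} {g : TPoly (Fin n → ℤ)} :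
    g ∈ Lext I ↔ ∃ f ∈ I, ∃ w, g = extend (laurentMon w) f ⊤ := by
  simp only [Lext, Set.mem_ofPred_eq, shiftZ_embed]

variable {I : Set (TPoly (Fin n → ℕ))} (hI : IsTropIdeal I)
include hI

theorem exists_extend_top_laurentMon_eq_of_le {f : TPoly (Fin n → ℕ)} (hf : f ∈ I)
    {w w' : Fin n → ℤ} (h : w ≤ w') :
    ∃ f' ∈ I, extend (laurentMon w') f ⊤ = extend (laurentMon w) f' ⊤ := by
  obtain ⟨t, rfl⟩ := exists_laurentMon_eq_of_le h
  refine ⟨tmulTerm 0 t f, hI.1.2.2.2 f hf 0 t, ?_⟩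
  have hcomp : laurentMon (laurentMon w t) = laurentMon w ∘ (· + t) :=
    funext fun s => (laurentMon_add w s t).symm
  rw [hcomp, (add_left_injective t).extend_comp (laurentMon_injective w), tmulTerm_eq_extend_top]
  simp only [zero_add]
  rfl

theorem exists_common_laurentMon {g₁ g₂ : TPoly (Fin n → ℤ)} (h₁ : g₁ ∈ Lext I)
    (h₂ : g₂ ∈ Lext I) : ∃ w, ∃ f₁ ∈ I, ∃ f₂ ∈ I,
      g₁ = extend (laurentMon w) f₁ ⊤ ∧ g₂ = extend (laurentMon w) f₂ ⊤ := by
  obtain ⟨p₁, hp₁, w₁, rfl⟩ := mem_Lext_iff.1 h₁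
  obtain ⟨p₂, hp₂, w₂, rfl⟩ := mem_Lext_iff.1 h₂
  obtain ⟨f₁, hf₁, e₁⟩ := exists_extend_top_laurentMon_eq_of_le hI hp₁ (inf_le_left (b := w₂))
  obtain ⟨f₂, hf₂, e₂⟩ := exists_extend_top_laurentMon_eq_of_le hI hp₂ (inf_le_right (a := w₁))
  exact ⟨w₁ ⊓ w₂, f₁, hf₁, f₂, hf₂, e₁, e₂⟩

theorem psupp_finite_of_mem_Lext {g : TPoly (Fin n → ℤ)} (hg : g ∈ Lext I) :
    (psupp g).Finite := by
  obtain ⟨f, hf, w, rfl⟩ := mem_Lext_iff.1 hg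
  exact ((hI.1.1 f hf).image _).subset (psupp_extend_top_subset (laurentMon_injective w) f)

theorem zeroPoly_mem_Lext : zeroPoly (Fin n → ℤ) ∈ Lext I :=
  mem_Lext_iff.2 ⟨_, hI.1.2.1, 0, (extend_const _ ⊤).symm⟩

theorem tadd_mem_Lext {g₁ g₂ : TPoly (Fin n → ℤ)} (h₁ : g₁ ∈ Lext I) (h₂ : g₂ ∈ Lext I) :
    tadd g₁ g₂ ∈ Lext I := by
  obtain ⟨w, f₁, hf₁, f₂, hf₂, rfl, rfl⟩ := exists_common_laurentMon hI h₁ h₂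
  exact mem_Lext_iff.2 ⟨tadd f₁ f₂, hI.1.2.2.1 f₁ hf₁ f₂ hf₂, w,
    tadd_extend_top (laurentMon_injective w) f₁ f₂⟩

theorem tmulTerm_mem_Lext {g : TPoly (Fin n → ℤ)} (hg : g ∈ Lext I) (c : TR) (t : Fin n → ℤ) :
    tmulTerm c t g ∈ Lext I := by
  obtain ⟨f, hf, w, rfl⟩ := mem_Lext_iff.1 hg
  refine mem_Lext_iff.2 ⟨tmulTerm c 0 f, hI.1.2.2.2 f hf c 0, w + t, funext fun y => ?_⟩
  rw [tmulTerm_apply_eq_add_sub, add_extend_top, extend_top_apply_sub (laurentMon_injective w),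
    tmulTerm_zero]
  simp only [laurentMon_add_right]

theorem exists_elim_mem_Lext {g₁ g₂ : TPoly (Fin n → ℤ)} (h₁ : g₁ ∈ Lext I)
    (h₂ : g₂ ∈ Lext I) (u : Fin n → ℤ) (hu : g₁ u = g₂ u) (hne : g₁ u ≠ ⊤) :
    ∃ h ∈ Lext I, Elim h g₁ g₂ u := by
  obtain ⟨w, f₁, hf₁, f₂, hf₂, rfl, rfl⟩ := exists_common_laurentMon hI h₁ h₂
  obtain ⟨h, hh, hElim⟩ :=
    exists_elim_extend_top (laurentMon_injective w) hI hf₁ hf₂ hu hne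
  exact ⟨_, mem_Lext_iff.2 ⟨h, hh, w, rfl⟩, hElim⟩

end Laurent

end TropStmt

theorem laurent_extension_isTropicalIdeal
    (n : ℕ) (I : Set (TropStmt.TPoly (Fin n → ℕ))) (hI : TropStmt.IsTropIdeal I) :
    TropStmt.IsTropIdeal (TropStmt.Lext I) :=
  open TropStmt in
  ⟨⟨fun _ hg => psupp_finite_of_mem_Lext hI hg, zeroPoly_mem_Lext hI,
      fun _ h₁ _ h₂ => tadd_mem_Lext hI h₁ h₂, fun _ hg => tmulTerm_mem_Lext hI hg⟩,
    fun _ h₁ _ h₂ => exists_elim_mem_Lext hI h₁ h₂⟩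
end
end

section
/- If I ⊆ ℝ̄[x₁,…,xₙ] is a tropical ideal and m is a monomial, then the colon ideal (I : m) = { f : m·f ∈ I } is a tropical ideal. -/
open scoped Classical
open Filter

noncomputable section

/-! The colon ideal `(I : x^m)` is the preimage of `I` under `f ↦ x^m ⊙ f`. Since monomials are
cancellative, this map is a coefficientwise translation of exponents by `m`, so it commutes with
the ideal operations, and an elimination in `I` of `x^(u+m)` from `x^m ⊙ f` and `x^m ⊙ g` is
supported on the translate `m + ℕⁿ`: translating it back eliminates `x^u` from `f` and `g`. -/

namespace TropStmt

variable {M : Type} [AddCancelCommMonoid M]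

theorem tmulTerm_add_right (c : TR) (v : M) (f : TPoly M) (t : M) :
    tmulTerm c v f (t + v) = c + f t := by
  have hex : ∃ s : M, s + v = t + v := ⟨t, rfl⟩
  rw [tmulTerm, dif_pos hex, add_right_cancel hex.choose_spec]

theorem tmulTerm_of_not_exists (c : TR) (v : M) (f : TPoly M) {u : M}
    (hu : ¬ ∃ t : M, t + v = u) : tmulTerm c v f u = ⊤ :=
  dif_neg hu

theorem TPoly.ext_of_translate (v : M) {f g : TPoly M} (hadd : ∀ t, f (t + v) = g (t + v))
    (hoff : ∀ u, (¬ ∃ t : M, t + v = u) → f u = g u) : f = g := by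
  funext u
  by_cases hu : ∃ t : M, t + v = u
  · obtain ⟨t, rfl⟩ := hu
    exact hadd t
  · exact hoff u hu

theorem tmulTerm_zeroPoly (c : TR) (v : M) : tmulTerm c v (zeroPoly M) = zeroPoly M :=
  TPoly.ext_of_translate v (fun t => by simp [tmulTerm_add_right, zeroPoly])
    (fun _ hu => tmulTerm_of_not_exists c v _ hu)

theorem tmulTerm_tadd (c : TR) (v : M) (f g : TPoly M) :
    tmulTerm c v (tadd f g) = tadd (tmulTerm c v f) (tmulTerm c v g) :=
  TPoly.ext_of_translate v (fun t => by simp only [tadd, tmulTerm_add_right, min_add_add_left])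
    (fun _ hu => by simp only [tadd, tmulTerm_of_not_exists c v _ hu, min_self])

theorem tmulTerm_comm (c c' : TR) (v v' : M) (f : TPoly M) :
    tmulTerm c' v' (tmulTerm c v f) = tmulTerm c v (tmulTerm c' v' f) := by
  refine TPoly.ext_of_translate (v + v') (fun t => ?_) (fun u hu => ?_)
  · rw [← add_assoc, tmulTerm_add_right, tmulTerm_add_right, add_right_comm,
      tmulTerm_add_right, tmulTerm_add_right, add_left_comm]
  · have off (a b : M) (hab : b + a = v + v') (d e : TR) :
        tmulTerm d a (tmulTerm e b f) u = ⊤ := by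
      by_cases hs : ∃ s : M, s + a = u
      · obtain ⟨s, rfl⟩ := hs
        have hs' : ¬ ∃ t : M, t + b = s := fun ⟨t, ht⟩ =>
          hu ⟨t, by rw [← ht, add_assoc, hab]⟩
        rw [tmulTerm_add_right, tmulTerm_of_not_exists _ _ _ hs', add_top]
      · exact tmulTerm_of_not_exists _ _ _ hs
    rw [off v' v rfl, off v v' (add_comm v' v)]

theorem psupp_eq_preimage_psupp_tmulTerm (v : M) (f : TPoly M) :
    psupp f = (· + v) ⁻¹' psupp (tmulTerm 0 v f) := by
  ext t
  simp only [psupp, Set.mem_ofPred_eq, Set.mem_preimage, tmulTerm_add_right, zero_add]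

theorem tmulTerm_comp_add_right {h : TPoly M} (v : M)
    (hoff : ∀ u, (¬ ∃ t : M, t + v = u) → h u = ⊤) :
    tmulTerm 0 v (fun t => h (t + v)) = h :=
  TPoly.ext_of_translate v (fun t => by rw [tmulTerm_add_right, zero_add])
    (fun u hu => by rw [tmulTerm_of_not_exists _ _ _ hu, hoff u hu])

theorem Elim.of_tmulTerm {h f g : TPoly M} {v u : M}
    (he : Elim h (tmulTerm 0 v f) (tmulTerm 0 v g) (u + v)) :
    Elim (fun t => h (t + v)) f g u :=
  ⟨he.1, fun w => by simpa only [tmulTerm_add_right, zero_add] using he.2 (w + v)⟩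

/-- The colon ideal `(I : x^v)`. -/
def colonMon (I : Set (TPoly M)) (v : M) : Set (TPoly M) := {f | tmulTerm 0 v f ∈ I}

theorem mem_colonMon {I : Set (TPoly M)} {v : M} {f : TPoly M} :
    f ∈ colonMon I v ↔ tmulTerm 0 v f ∈ I :=
  Iff.rfl

theorem IsTIdeal.colonMon {I : Set (TPoly M)} (hI : IsTIdeal I) (v : M) :
    IsTIdeal (colonMon I v) := by
  obtain ⟨hfin, hzero, hadd, hmul⟩ := hI
  refine ⟨fun f hf => ?_, ?_, fun f hf g hg => ?_, fun f hf c w => ?_⟩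
  · rw [psupp_eq_preimage_psupp_tmulTerm v f]
    exact (hfin _ hf).preimage (add_left_injective v).injOn
  · rwa [mem_colonMon, tmulTerm_zeroPoly]
  · rw [mem_colonMon, tmulTerm_tadd]
    exact hadd _ hf _ hg
  · rw [mem_colonMon, tmulTerm_comm]
    exact hmul _ hf c w

theorem IsTropIdeal.colonMon {I : Set (TPoly M)} (hI : IsTropIdeal I) (v : M) :
    IsTropIdeal (colonMon I v) := by
  refine ⟨hI.1.colonMon v, fun f hf g hg u hfg hfu => ?_⟩
  obtain ⟨h, hhI, he⟩ := hI.2 _ hf _ hg (u + v)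
    (by rw [tmulTerm_add_right, tmulTerm_add_right, hfg])
    (by rwa [tmulTerm_add_right, zero_add])
  -- `h` dominates `min (x^v ⊙ f) (x^v ⊙ g)`, which is `∞` off the translate of the exponents.
  have hoff : ∀ w, (¬ ∃ t : M, t + v = w) → h w = ⊤ := fun w hw => by
    simpa [tmulTerm_of_not_exists _ _ _ hw] using (he.2 w).1
  refine ⟨fun t => h (t + v), ?_, he.of_tmulTerm⟩
  rwa [mem_colonMon, tmulTerm_comp_add_right v hoff]

end TropStmt

theorem colon_ideal_isTropicalIdeal
    (n : ℕ) (I : Set (TropStmt.TPoly (Fin n → ℕ))) (hI : TropStmt.IsTropIdeal I)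
    (m : Fin n → ℕ) :
    TropStmt.IsTropIdeal {f | TropStmt.tmulTerm 0 m f ∈ I} :=
  hI.colonMon m
end
end

section
/- If I ⊆ ℝ̄[x₁,…,xₙ] is a tropical ideal and m = x₁⋯xₙ is the product of the variables, then the saturation (I : m^∞) = { f : m^k·f ∈ I for some k ≥ 0 } equals I·ℝ̄[x₁^{±1},…,xₙ^{±1}] ∩ ℝ̄[x₁,…,xₙ]. -/
open scoped Classical
open Filter

noncomputable section

/-! Passing to Laurent polynomials is injective and commutes with multiplication by
monomials. So if `f = x^v ⊙ g` with `g ∈ I`, choosing `k` with `k + v ≥ 0` gives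
`m^k ⊙ f = x^{k+v} ⊙ g ∈ I`; conversely `f = m^{-k} ⊙ (m^k ⊙ f)`. -/

namespace TropStmt

variable {n : ℕ}

def natVecCast (u : Fin n → ℕ) : Fin n → ℤ := fun i => u i

lemma natVecCast_injective : Function.Injective (natVecCast (n := n)) := fun _ _ h =>
  funext fun i => Int.ofNat_inj.mp (congrFun h i)

lemma natVecCast_add (u v : Fin n → ℕ) :
    natVecCast (u + v) = natVecCast u + natVecCast v := by
  funext i
  simp [natVecCast]

lemma embed_natVecCast (f : TPoly (Fin n → ℕ)) (u : Fin n → ℕ) :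
    embed f (natVecCast u) = f u := by
  have hu : ∃ v : Fin n → ℕ, (fun i => (v i : ℤ)) = natVecCast u := ⟨u, rfl⟩
  rw [embed, dif_pos hu, natVecCast_injective hu.choose_spec]

lemma embed_of_notMem_range (f : TPoly (Fin n → ℕ)) {u : Fin n → ℤ}
    (hu : u ∉ Set.range natVecCast) : embed f u = ⊤ :=
  dif_neg hu

lemma embed_injective : Function.Injective (embed (n := n)) := fun f g h =>
  funext fun u => by rw [← embed_natVecCast f u, h, embed_natVecCast]

lemma shiftZ_shiftZ (v w : Fin n → ℤ) (f : TPoly (Fin n → ℤ)) :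
    shiftZ v (shiftZ w f) = shiftZ (v + w) f := by
  funext u
  simp only [shiftZ, sub_sub]

lemma shiftZ_zero (f : TPoly (Fin n → ℤ)) : shiftZ 0 f = f := by
  funext u
  simp [shiftZ]

lemma IsTIdeal.tmulTerm_mem {M : Type} [AddCommMonoid M] {I : Set (TPoly M)}
    (hI : IsTIdeal I) {f : TPoly M} (hf : f ∈ I) (c : TR) (v : M) : tmulTerm c v f ∈ I :=
  hI.2.2.2 f hf c v

lemma tmulTerm_add_apply {M : Type} [AddCancelCommMonoid M] (c : TR) (v t : M)
    (f : TPoly M) : tmulTerm c v f (t + v) = c + f t := by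
  have ht : ∃ s : M, s + v = t + v := ⟨t, rfl⟩
  rw [tmulTerm, dif_pos ht, add_right_cancel ht.choose_spec]

lemma tmulTerm_of_forall_ne {M : Type} [AddCommMonoid M] (c : TR) (v : M) (f : TPoly M)
    {u : M} (hu : ∀ t, t + v ≠ u) : tmulTerm c v f u = ⊤ :=
  dif_neg (not_exists.mpr hu)

lemma embed_tmulTerm (w : Fin n → ℕ) (f : TPoly (Fin n → ℕ)) :
    embed (tmulTerm 0 w f) = shiftZ (natVecCast w) (embed f) := by
  funext u
  simp only [shiftZ]
  by_cases hu : u - natVecCast w ∈ Set.range natVecCast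
  · obtain ⟨t, ht⟩ := hu
    have hu' : u = natVecCast (t + w) := by rw [natVecCast_add, ht, sub_add_cancel]
    rw [← ht, hu', embed_natVecCast, embed_natVecCast, tmulTerm_add_apply, zero_add]
  · rw [embed_of_notMem_range f hu]
    by_cases hu' : u ∈ Set.range natVecCast
    · obtain ⟨s, rfl⟩ := hu'
      rw [embed_natVecCast]
      refine tmulTerm_of_forall_ne _ _ _ fun t hts => hu ⟨t, ?_⟩
      rw [← hts, natVecCast_add, add_sub_cancel_right]
    · exact embed_of_notMem_range _ hu'

/-- `x^v ⊙ m^k` is an honest monomial `x^w` once `k` is large. -/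
lemma exists_natVecCast_eq_const_add (v : Fin n → ℤ) :
    ∃ (k : ℕ) (w : Fin n → ℕ), natVecCast w = natVecCast (fun _ => k) + v := by
  obtain ⟨k, hk⟩ : ∃ k : ℕ, ∀ i, -v i ≤ k :=
    ⟨Finset.univ.sup fun i => (-v i).toNat, fun i =>
      (Int.self_le_toNat _).trans (Int.ofNat_le.mpr (Finset.le_sup (f := fun i => (-v i).toNat)
        (Finset.mem_univ i)))⟩
  refine ⟨k, fun i => (k + v i).toNat, funext fun i => ?_⟩
  simp only [natVecCast, Pi.add_apply]
  exact Int.toNat_of_nonneg (by linarith [hk i])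

end TropStmt

open TropStmt

theorem saturation_eq_laurent_extension_inter
    (n : ℕ) (I : Set (TropStmt.TPoly (Fin n → ℕ))) (hI : TropStmt.IsTropIdeal I) :
    {f : TropStmt.TPoly (Fin n → ℕ) | ∃ k : ℕ, TropStmt.tmulTerm 0 (fun _ => k) f ∈ I} =
      TropStmt.restrictPoly (TropStmt.Lext I) := by
  ext f
  constructor
  · rintro ⟨k, hk⟩
    refine ⟨_, hk, -natVecCast (fun _ => k), ?_⟩
    rw [embed_tmulTerm, shiftZ_shiftZ, neg_add_cancel, shiftZ_zero]
  · rintro ⟨g, hg, v, hfg⟩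
    obtain ⟨k, w, hw⟩ := exists_natVecCast_eq_const_add v
    refine ⟨k, ?_⟩
    have hkw : tmulTerm 0 (fun _ => k) f = tmulTerm 0 w g := embed_injective <| by
      rw [embed_tmulTerm, embed_tmulTerm, hfg, shiftZ_shiftZ, hw]
    exact hkw ▸ hI.1.tmulTerm_mem hg 0 w
end
end

section
/- For a tropical ideal I ⊆ ℝ̄[x₁,…,xₙ] and any weight vector w ∈ ℝⁿ, the initial ideal of the extension of I to the Laurent semiring equals the extension of the initial ideal: in_w(I·ℝ̄[x^{±1}]) = in_w(I)·𝔹[x^{±1}]. -/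
open scoped Classical
open Filter

noncomputable section

/-!
Every element of the Laurent extension is a monomial multiple `x^v ⊙ f` with `f ∈ I`, and taking
initial forms commutes with both operations involved: multiplying by `x^v` adds the same constant
`w · v` to every term of `f` at `w`, and in the image of `ℝ̄[x]` in `ℝ̄[x^{±1}]` the monomials with
a negative exponent carry the coefficient `∞`, so they never attain the minimum.
-/

namespace TropStmt

variable {n : ℕ}

def castZ (u : Fin n → ℕ) : Fin n → ℤ := fun i => u i

lemma castZ_injective : Function.Injective (castZ (n := n)) :=
  fun _ _ h => funext fun i => Nat.cast_injective (congrFun h i)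

lemma dotZ_add (w : Fin n → ℝ) (a b : Fin n → ℤ) : dotZ w (a + b) = dotZ w a + dotZ w b := by
  simp only [dotZ, Pi.add_apply, Int.cast_add, mul_add, Finset.sum_add_distrib]

lemma dotZ_castZ (w : Fin n → ℝ) (u : Fin n → ℕ) : dotZ w (castZ u) = dotN w u := by
  simp only [dotZ, dotN, castZ, Int.cast_natCast]

lemma embed_castZ (f : TPoly (Fin n → ℕ)) (u : Fin n → ℕ) : embed f (castZ u) = f u := by
  have hu : ∃ v : Fin n → ℕ, (fun i => (v i : ℤ)) = castZ u := ⟨u, rfl⟩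
  rw [embed, dif_pos hu, castZ_injective hu.choose_spec]

lemma embed_eq_top_of_notMem_range {f : TPoly (Fin n → ℕ)} {u : Fin n → ℤ}
    (hu : u ∉ Set.range castZ) : embed f u = ⊤ :=
  dif_neg hu

lemma attainsZ_shiftZ_iff {w : Fin n → ℝ} {g : TPoly (Fin n → ℤ)} {v u : Fin n → ℤ} :
    attainsZ w (shiftZ v g) u ↔ attainsZ w g (u - v) := by
  have hval : ∀ q, shiftZ v g q + (dotZ w q : TR) = g (q - v) + dotZ w (q - v) + dotZ w v := by
    intro q
    rw [shiftZ, add_assoc, ← WithTop.coe_add, ← dotZ_add, sub_add_cancel]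
  simp only [attainsZ, hval, WithTop.add_le_add_iff_right WithTop.coe_ne_top]
  exact and_congr Iff.rfl ⟨fun h q => by simpa using h (q + v), fun h q => h (q - v)⟩

lemma inSuppZ_shiftZ (w : Fin n → ℝ) (g : TPoly (Fin n → ℤ)) (v : Fin n → ℤ) :
    inSuppZ w (shiftZ v g) = (fun u => u + v) '' inSuppZ w g := by
  ext u
  rw [Set.image_add_right, Set.mem_preimage, ← sub_eq_add_neg]
  exact attainsZ_shiftZ_iff

lemma attainsZ_embed_castZ_iff {w : Fin n → ℝ} {f : TPoly (Fin n → ℕ)} {u : Fin n → ℕ} :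
    attainsZ w (embed f) (castZ u) ↔ attainsN w f u := by
  unfold attainsZ attainsN
  refine and_congr (by rw [embed_castZ]) ⟨fun h q => ?_, fun h q => ?_⟩
  · simpa only [embed_castZ, dotZ_castZ] using h (castZ q)
  · by_cases hq : q ∈ Set.range castZ
    · obtain ⟨q, rfl⟩ := hq
      simpa only [embed_castZ, dotZ_castZ] using h q
    · rw [embed_eq_top_of_notMem_range hq, top_add]
      exact le_top

lemma inSuppZ_embed (w : Fin n → ℝ) (f : TPoly (Fin n → ℕ)) :
    inSuppZ w (embed f) = castZ '' inSuppN w f := by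
  ext u
  by_cases hu : u ∈ Set.range castZ
  · obtain ⟨u, rfl⟩ := hu
    rw [castZ_injective.mem_set_image]
    exact attainsZ_embed_castZ_iff
  · refine iff_of_false (fun h => h.1 (embed_eq_top_of_notMem_range hu)) ?_
    rintro ⟨u', -, rfl⟩
    exact hu ⟨u', rfl⟩

end TropStmt

theorem initial_of_laurent_extension_general
    (n : ℕ) (I : Set (TropStmt.TPoly (Fin n → ℕ)))
    (w : Fin n → ℝ) :
    TropStmt.inIdealZ (TropStmt.Lext I) w =
      {S | ∃ f ∈ I, ∃ v : Fin n → ℤ,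
        S = (fun u => u + v) ''
          ((fun (u : Fin n → ℕ) (i : Fin n) => ((u i : ℤ))) '' TropStmt.inSuppN w f)} := by
  have hinit : ∀ f v, TropStmt.inSuppZ w (TropStmt.shiftZ v (TropStmt.embed f)) =
      (fun u => u + v) '' (TropStmt.castZ '' TropStmt.inSuppN w f) := fun f v => by
    rw [TropStmt.inSuppZ_shiftZ, TropStmt.inSuppZ_embed]
  ext S
  constructor
  · rintro ⟨_, ⟨f, hf, v, rfl⟩, rfl⟩
    exact ⟨f, hf, v, hinit f v⟩
  · rintro ⟨f, hf, v, rfl⟩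
    exact ⟨_, ⟨f, hf, v, rfl⟩, (hinit f v).symm⟩

theorem initial_of_laurent_extension
    (n : ℕ) (I : Set (TropStmt.TPoly (Fin n → ℕ))) (hI : TropStmt.IsTropIdeal I)
    (w : Fin n → ℝ) :
    TropStmt.inIdealZ (TropStmt.Lext I) w =
      {S | ∃ f ∈ I, ∃ v : Fin n → ℤ,
        S = (fun u => u + v) ''
          ((fun (u : Fin n → ℕ) (i : Fin n) => ((u i : ℤ))) '' TropStmt.inSuppN w f)} :=
  initial_of_laurent_extension_general n I w
end
end

section
/- Let I ⊆ ℝ̄[x₀,…,xₙ] be a homogeneous tropical ideal and w ∈ ℝⁿ. Then the initial ideal of the dehomogenization of I at x₀ = 0 (tropical multiplicative identity) with respect to w equals the dehomogenization of the initial ideal of I with respect to (0, w): in_w(I|_{x₀=0}) = in_{(0,w)}(I)|_{x₀=0}. -/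
open scoped Classical
open Filter

noncomputable section

/-!
Setting `x₀ = 0` turns the weight `(0, w)` of a monomial `x₀ᵏ xᵘ` into the weight `w · u` of
`xᵘ`, and the coefficient of `xᵘ` in `f|_{x₀=0}` is the least coefficient among the `x₀ᵏ xᵘ`,
which finiteness of the support makes attained. So a monomial `xᵘ` attains the minimum of
`f|_{x₀=0}` at `w` exactly when some `x₀ᵏ xᵘ` attains the minimum of `f` at `(0, w)`.
-/

namespace TropStmt

lemma finite_range_of_finite_psupp {M : Type} [AddCommMonoid M] {f : TPoly M}
    (hf : (psupp f).Finite) : (Set.range f).Finite := by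
  refine ((hf.image f).insert ⊤).subset ?_
  rintro _ ⟨u, rfl⟩
  by_cases hu : f u = ⊤
  · exact Or.inl hu
  · exact Or.inr ⟨u, hu, rfl⟩

section Dehom

variable {n : ℕ}

lemma dotN_cons_zero (w : Fin n → ℝ) (k : ℕ) (u : Fin n → ℕ) :
    dotN (Fin.cons (0 : ℝ) w) (Fin.cons k u) = dotN w u := by
  simp [dotN, Fin.sum_univ_succ]

lemma attainsN_cons_zero_iff (w : Fin n → ℝ) (f : TPoly (Fin (n + 1) → ℕ)) (k : ℕ)
    (u : Fin n → ℕ) :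
    attainsN (Fin.cons 0 w) f (Fin.cons k u) ↔ f (Fin.cons k u) ≠ ⊤ ∧
      ∀ j v, f (Fin.cons k u) + ((dotN w u : ℝ) : TR) ≤ f (Fin.cons j v) + ((dotN w v : ℝ) : TR) := by
  simp only [attainsN, Fin.forall_fin_succ_pi, dotN_cons_zero]

variable {f : TPoly (Fin (n + 1) → ℕ)}

lemma isLeast_dehom (hf : (psupp f).Finite) (u : Fin n → ℕ) :
    IsLeast {t | ∃ k : ℕ, t = f (Fin.cons k u)} (dehom f u) := by
  have hfin : {t | ∃ k : ℕ, t = f (Fin.cons k u)}.Finite :=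
    (finite_range_of_finite_psupp hf).subset fun _ ⟨k, hk⟩ => ⟨_, hk.symm⟩
  exact ⟨Set.Nonempty.csInf_mem ⟨_, 0, rfl⟩ hfin, fun _ ht => csInf_le hfin.bddBelow ht⟩

lemma dehom_le (hf : (psupp f).Finite) (k : ℕ) (u : Fin n → ℕ) :
    dehom f u ≤ f (Fin.cons k u) :=
  (isLeast_dehom hf u).2 ⟨k, rfl⟩

lemma exists_dehom_eq (hf : (psupp f).Finite) (u : Fin n → ℕ) :
    ∃ k : ℕ, dehom f u = f (Fin.cons k u) :=
  (isLeast_dehom hf u).1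

lemma le_dehom_add_iff (hf : (psupp f).Finite) {a c : TR} (v : Fin n → ℕ) :
    a ≤ dehom f v + c ↔ ∀ j : ℕ, a ≤ f (Fin.cons j v) + c := by
  refine ⟨fun h j => h.trans (add_le_add_left (dehom_le hf j v) c), fun h => ?_⟩
  obtain ⟨j, hj⟩ := exists_dehom_eq hf v
  exact hj ▸ h j

theorem inSuppN_dehom (w : Fin n → ℝ) (hf : (psupp f).Finite) :
    inSuppN w (dehom f) = {u | ∃ k : ℕ, Fin.cons k u ∈ inSuppN (Fin.cons 0 w) f} := by
  ext u
  simp only [inSuppN, Set.mem_ofPred_eq, attainsN_cons_zero_iff]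
  constructor
  · rintro ⟨hne, hmin⟩
    obtain ⟨k, hk⟩ := exists_dehom_eq hf u
    exact ⟨k, hk ▸ hne, fun j v => (le_dehom_add_iff hf v).1 (hk ▸ hmin v) j⟩
  · rintro ⟨k, hne, hmin⟩
    have hk : dehom f u = f (Fin.cons k u) := by
      refine le_antisymm (dehom_le hf k u) ?_
      obtain ⟨j, hj⟩ := exists_dehom_eq hf u
      rw [hj, ← WithTop.add_le_add_iff_right (WithTop.coe_ne_top (a := dotN w u))]
      exact hmin j u
    exact ⟨hk ▸ hne, fun v => hk ▸ (le_dehom_add_iff hf v).2 fun j => hmin j v⟩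

end Dehom

end TropStmt

theorem initial_of_dehomogenization
    (n : ℕ) (I : Set (TropStmt.TPoly (Fin (n + 1) → ℕ)))
    (hI : TropStmt.IsHomogTropIdeal I) (w : Fin n → ℝ) :
    {S | ∃ f ∈ I, S = TropStmt.inSuppN w (TropStmt.dehom f)} =
      {S | ∃ f ∈ I,
        S = {u : Fin n → ℕ | ∃ k : ℕ,
          Fin.cons k u ∈ TropStmt.inSuppN (Fin.cons (0 : ℝ) w) f}} := by
  have hfin : ∀ f ∈ I, (TropStmt.psupp f).Finite := hI.1.1.1
  ext S
  exact exists_congr fun f => and_congr_right fun hf => by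
    rw [TropStmt.inSuppN_dehom w (hfin f hf)]
end
end

section
/- Let I ⊆ ℝ̄[x₁,…,xₙ] be a tropical ideal and ≺ a monomial term order. For any finite collection E of monomials, the set E \ { in_≺(f) : f ∈ I with support contained in E } is a basis of the underlying matroid of the valuated matroid of polynomials of I with support in E. -/
open scoped Classical
open Filter

noncomputable section

/-!
Write `B` for the initial monomials of the polynomials of `I|_E` and call the monomials of
`E \ B` standard. A nonzero polynomial of `I` supported on standard monomials would have its
initial monomial both in `B` and outside it, so the standard monomials are independent.
For spanning, every `v ∈ B` has a reduced polynomial in `I|_E`: initial monomial `v`, all other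
monomials standard. This goes by downward induction along `≺` on the finite set `B`: take any
polynomial of `I|_E` with initial monomial `v` and remove its non-standard monomials `w ≠ v` one
at a time by tropical elimination against the reduced polynomial of `w ≻ v`. That polynomial is
supported on `w` and standard monomials above `v`, so the elimination keeps the initial monomial
`v` and creates no new non-standard monomial.
-/

namespace TropStmt

section Elimination

variable {M : Type}

lemma tmulTerm_zero_apply [AddCommMonoid M] (c : TR) (f : TPoly M) (u : M) :
    tmulTerm c 0 f u = c + f u := by
  have hu : ∃ t : M, t + 0 = u := ⟨u, add_zero u⟩
  have hchoose : hu.choose = u := (add_zero _).symm.trans hu.choose_spec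
  simp only [tmulTerm, dif_pos hu, hchoose]

lemma Elim.psupp_subset {h f g : TPoly M} {v : M} (hh : Elim h f g v) :
    psupp h ⊆ psupp f ∪ psupp g := by
  intro u hu
  by_contra hfg
  simp only [psupp, Set.mem_union, Set.mem_ofPred_eq, not_or, not_not] at hfg
  have hle := (hh.2 u).1
  rw [hfg.1, hfg.2, min_self, top_le_iff] at hle
  exact hu hle

lemma Elim.apply_eq_of_right_eq_top {h f g : TPoly M} {v : M} (hh : Elim h f g v) {u : M}
    (hgu : g u = ⊤) : h u = f u := by
  by_cases hfu : f u = g u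
  · have hle := (hh.2 u).1
    rwa [hfu, min_self, hgu, top_le_iff, ← hgu, ← hfu] at hle
  · rw [(hh.2 u).2 hfu, hgu, min_top_right]

/-- Rescaling `g` by a constant makes the two coefficients at `v` agree, so that the
elimination axiom applies. -/
lemma IsTropIdeal.exists_elim [AddCommMonoid M] {I : Set (TPoly M)} (hI : IsTropIdeal I)
    {f g : TPoly M} (hf : f ∈ I) (hg : g ∈ I) {v : M} (hfv : f v ≠ ⊤) (hgv : g v ≠ ⊤) :
    ∃ h ∈ I, h v = ⊤ ∧ psupp h ⊆ psupp f ∪ psupp g ∧ ∀ u, g u = ⊤ → h u = f u := by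
  obtain ⟨a, ha⟩ := WithTop.ne_top_iff_exists.mp hgv
  obtain ⟨b, hb⟩ := WithTop.ne_top_iff_exists.mp hfv
  have hg'I : tmulTerm ((b - a : ℝ) : TR) 0 g ∈ I := hI.1.2.2.2 g hg _ 0
  have hg'_eq_top (u : M) : tmulTerm ((b - a : ℝ) : TR) 0 g u = ⊤ ↔ g u = ⊤ := by
    simp [tmulTerm_zero_apply]
  have hg'v : f v = tmulTerm ((b - a : ℝ) : TR) 0 g v := by
    rw [tmulTerm_zero_apply, ← ha, ← hb, ← WithTop.coe_add, sub_add_cancel]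
  obtain ⟨h, hhI, hh⟩ := hI.2 f hf _ hg'I v hg'v hfv
  refine ⟨h, hhI, hh.1, fun u hu => ?_, fun u hgu => hh.apply_eq_of_right_eq_top ?_⟩
  · rcases hh.psupp_subset hu with hfu | hgu
    · exact Or.inl hfu
    · exact Or.inr fun hgu' => hgu ((hg'_eq_top u).mpr hgu')
  · exact (hg'_eq_top u).mpr hgu

end Elimination

lemma IsTermOrder.isStrictTotalOrder {n : ℕ} {r : (Fin n → ℕ) → (Fin n → ℕ) → Prop}
    (hr : IsTermOrder n r) : IsStrictTotalOrder (Fin n → ℕ) r where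
  irrefl := hr.irrefl
  trans := hr.trans
  trichotomous u v huv hvu := by
    by_contra h
    exact (hr.total u v h).elim huv hvu

section InitialMonomials

variable {n : ℕ} {r : (Fin n → ℕ) → (Fin n → ℕ) → Prop}

def initialMonomials (I : Set (TPoly (Fin n → ℕ))) (r : (Fin n → ℕ) → (Fin n → ℕ) → Prop)
    (E : Finset (Fin n → ℕ)) : Set (Fin n → ℕ) :=
  {u | ∃ f ∈ I, psupp f ⊆ ↑E ∧ isInitialMon r f u}

lemma initialMonomials_subset (I : Set (TPoly (Fin n → ℕ))) (E : Finset (Fin n → ℕ)) :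
    initialMonomials I r E ⊆ E :=
  fun _ ⟨_, _, hfE, hfu⟩ => hfE hfu.1

variable [IsStrictTotalOrder (Fin n → ℕ) r]

lemma exists_isInitialMon {f : TPoly (Fin n → ℕ)} (hfin : (psupp f).Finite)
    (hne : ∃ u, f u ≠ ⊤) : ∃ u, isInitialMon r f u := by
  obtain ⟨u₀, hu₀⟩ := hne
  obtain ⟨⟨u, hu⟩, -, hmin⟩ := (hfin.wellFoundedOn (r := r)).has_min Set.univ ⟨⟨u₀, hu₀⟩, trivial⟩
  refine ⟨u, hu, fun v hv hvu => ?_⟩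
  rcases trichotomous_of r u v with huv | rfl | hvu'
  · exact huv
  · exact absurd rfl hvu
  · exact absurd hvu' (hmin ⟨v, hv⟩ trivial)

lemma eq_top_of_psupp_subset_diff_initialMonomials {I : Set (TPoly (Fin n → ℕ))}
    (hI : IsTropIdeal I) {E : Finset (Fin n → ℕ)} {f : TPoly (Fin n → ℕ)} (hf : f ∈ I)
    (hfE : psupp f ⊆ ↑E \ initialMonomials I r E) (u : Fin n → ℕ) : f u = ⊤ := by
  by_contra hu
  obtain ⟨v, hv⟩ := exists_isInitialMon (r := r) (hI.1.1 f hf) ⟨u, hu⟩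
  exact (hfE hv.1).2 ⟨f, hf, hfE.trans Set.sdiff_subset, hv⟩

end InitialMonomials

section Reduction

variable {n : ℕ} {r : (Fin n → ℕ) → (Fin n → ℕ) → Prop} [IsStrictTotalOrder (Fin n → ℕ) r]
  {I : Set (TPoly (Fin n → ℕ))} {E : Finset (Fin n → ℕ)}

def IsReduced (I : Set (TPoly (Fin n → ℕ))) (r : (Fin n → ℕ) → (Fin n → ℕ) → Prop)
    (E : Finset (Fin n → ℕ)) (f : TPoly (Fin n → ℕ)) (v : Fin n → ℕ) : Prop :=
  isInitialMon r f v ∧ psupp f ⊆ insert v (↑E \ initialMonomials I r E)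

lemma exists_elim_isReduced (hI : IsTropIdeal I) {f g : TPoly (Fin n → ℕ)} {v w : Fin n → ℕ}
    (hg : g ∈ I) (hgE : psupp g ⊆ E) (hgv : isInitialMon r g v) (hgw : g w ≠ ⊤) (hwv : w ≠ v)
    (hf : f ∈ I) (hfw : IsReduced I r E f w) :
    ∃ h ∈ I, psupp h ⊆ E ∧ isInitialMon r h v ∧ h w = ⊤ ∧
      ∀ x ∈ psupp h, x ∈ initialMonomials I r E → x ∈ psupp g := by
  have hvw : r v w := hgv.2 w hgw hwv
  obtain ⟨h, hhI, hhw, hhsupp, hhg⟩ := hI.exists_elim hg hf hgw hfw.1.1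
  have hfv : f v = ⊤ := by
    by_contra hfv
    exact asymm_of r hvw (hfw.1.2 v hfv hwv.symm)
  refine ⟨h, hhI, fun x hx => ?_, ⟨by rw [hhg v hfv]; exact hgv.1, fun x hx hxv => ?_⟩, hhw,
    fun x hx hxB => ?_⟩
  · rcases hhsupp hx with hgx | hfx
    · exact hgE hgx
    · rcases hfw.2 hfx with rfl | hxS
      exacts [hgE hgw, hxS.1]
  · rcases hhsupp hx with hgx | hfx
    · exact hgv.2 x hgx hxv
    · by_cases hxw : x = w
      · exact hxw ▸ hvw
      · exact trans_of r hvw (hfw.1.2 x hfx hxw)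
  · rcases hhsupp hx with hgx | hfx
    · exact hgx
    · rcases hfw.2 hfx with rfl | hxS
      exacts [absurd hhw hx, absurd hxB hxS.2]

lemma exists_isReduced_of_forall_gt (hI : IsTropIdeal I) {v : Fin n → ℕ}
    (hred : ∀ w ∈ initialMonomials I r E, r v w → ∃ f ∈ I, IsReduced I r E f w)
    (T : Finset (Fin n → ℕ)) {g : TPoly (Fin n → ℕ)} (hg : g ∈ I) (hgE : psupp g ⊆ E)
    (hgv : isInitialMon r g v) (hgT : ∀ x ∈ psupp g, x ∈ initialMonomials I r E → x ≠ v → x ∈ T) :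
    ∃ f ∈ I, IsReduced I r E f v := by
  induction T using Finset.induction_on generalizing g with
  | empty =>
    refine ⟨g, hg, hgv, fun x hx => ?_⟩
    by_cases hxv : x = v
    · exact Or.inl hxv
    · exact Or.inr ⟨hgE hx, fun hxB => Finset.notMem_empty x (hgT x hx hxB hxv)⟩
  | insert w T _ ih =>
    by_cases hw : w ∈ psupp g ∧ w ∈ initialMonomials I r E ∧ w ≠ v
    · obtain ⟨f, hf, hfw⟩ := hred w hw.2.1 (hgv.2 w hw.1 hw.2.2)
      obtain ⟨h, hhI, hhE, hhv, hhw, hhg⟩ := exists_elim_isReduced hI hg hgE hgv hw.1 hw.2.2 hf hfw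
      refine ih hhI hhE hhv fun x hx hxB hxv => ?_
      refine (Finset.mem_insert.1 (hgT x (hhg x hx hxB) hxB hxv)).resolve_left ?_
      rintro rfl
      exact hx hhw
    · refine ih hg hgE hgv fun x hx hxB hxv => ?_
      refine (Finset.mem_insert.1 (hgT x hx hxB hxv)).resolve_left ?_
      rintro rfl
      exact hw ⟨hx, hxB, hxv⟩

lemma exists_isReduced (hI : IsTropIdeal I) {v : Fin n → ℕ} (hv : v ∈ initialMonomials I r E) :
    ∃ f ∈ I, IsReduced I r E f v := by
  have hfin : (initialMonomials I r E).Finite := E.finite_toSet.subset (initialMonomials_subset I E)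
  refine (hfin.wellFoundedOn (r := Function.swap r)).induction hv
    (P := fun v => ∃ f ∈ I, IsReduced I r E f v) fun v hv ih => ?_
  obtain ⟨g, hg, hgE, hgv⟩ := hv
  exact exists_isReduced_of_forall_gt hI ih E hg hgE hgv fun x hx _ _ => hgE hx

end Reduction

end TropStmt

theorem standard_monomials_form_basis
    (n : ℕ) (I : Set (TropStmt.TPoly (Fin n → ℕ))) (hI : TropStmt.IsTropIdeal I)
    (r : (Fin n → ℕ) → (Fin n → ℕ) → Prop) (hr : TropStmt.IsTermOrder n r)
    (E : Finset (Fin n → ℕ)) :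
    (∀ f ∈ I, TropStmt.psupp f ⊆
        ((E : Set (Fin n → ℕ)) \ {u | ∃ f ∈ I, TropStmt.psupp f ⊆ ↑E ∧ TropStmt.isInitialMon r f u}) →
      ∀ u, f u = ⊤) ∧
    ∀ u ∈ (E : Set (Fin n → ℕ)) ∩ {u | ∃ f ∈ I, TropStmt.psupp f ⊆ ↑E ∧ TropStmt.isInitialMon r f u},
      ∃ f ∈ I, (∃ v, f v ≠ ⊤) ∧ TropStmt.psupp f ⊆
        insert u ((E : Set (Fin n → ℕ)) \ {u | ∃ f ∈ I, TropStmt.psupp f ⊆ ↑E ∧ TropStmt.isInitialMon r f u}) := by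
  have := hr.isStrictTotalOrder
  refine ⟨fun f hf hfE => TropStmt.eq_top_of_psupp_subset_diff_initialMonomials hI hf hfE,
    fun u hu => ?_⟩
  obtain ⟨f, hf, hfu, hfE⟩ := TropStmt.exists_isReduced hI hu.2
  exact ⟨f, hf, ⟨u, hfu.1⟩, hfE⟩
end
end
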